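/- Fix constants M > 1, K > 0 and β ∈ (0,1). There exist c > 0 and l₀ ∈ ℕ (depending only on M, K and β) such that for every l ≥ l₀, every Jacobi matrix H on {1,…,l} as in the context, and every normalized eigenvector u of H, there exists n₀ ∈ {1,…,l} such that for every m ∈ {1,…,l−1} with |m − n₀| ≤ c·l^β one has max(|u(m)|, |u(m+1)|) ≥ e^{−l^β}. -/

import Mathlib

/-!
Let `n₀` be a site where `|u|` is maximal, so `|u(n₀)| ≥ l^{-1/2}`. The eigenvalue equation at
`n₀` gives `|E| ≤ 2M + K`; the three-term recurrence can then be solved for either outer term,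
so the sup-norm Prüfer radius changes by at most the factor `C = M(3M + 2K)` per step in either
direction. At distance `d ≤ l^β / (2 log C)` from `n₀` it is therefore at least
`l^{-1/2} C^{-d} ≥ e^{-l^β}` as soon as `log l ≤ l^β`.
-/

/-- Jacobi matrix on `ℓ²({1,…,L})` with Dirichlet boundary conditions:
`(Hu)(n) = a(n+1)u(n+1) + a(n)u(n-1) + V(n)u(n)`, site `n = i.val + 1`. -/
noncomputable def jacobiMatrix (L : ℕ) (a V : ℕ → ℝ) : Matrix (Fin L) (Fin L) ℝ :=
  fun i j =>
    if i.val + 1 = j.val then a (j.val + 1)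
    else if j.val + 1 = i.val then a (i.val + 1)
    else if i = j then V (i.val + 1) else 0

/-- Extension of `u : Fin L → ℝ` to `ℕ` by `0`; site `n ∈ {1,…,L}` is `u ⟨n-1⟩`. -/
def extV (L : ℕ) (u : Fin L → ℝ) (n : ℕ) : ℝ :=
  if h : 1 ≤ n ∧ n ≤ L then u ⟨n - 1, by omega⟩ else 0

section JacobiRow

variable {l : ℕ}

lemma extV_zero (u : Fin l → ℝ) : extV l u 0 = 0 := dif_neg (by omega)

lemma extV_of_lt (u : Fin l → ℝ) {n : ℕ} (hn : l < n) : extV l u n = 0 := dif_neg (by omega)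

lemma extV_succ (u : Fin l → ℝ) (i : Fin l) : extV l u (i + 1) = u i :=
  dif_pos ⟨by omega, i.isLt⟩

lemma abs_extV_le {u : Fin l → ℝ} {B : ℝ} (hB : 0 ≤ B) (hu : ∀ j, |u j| ≤ B) (n : ℕ) :
    |extV l u n| ≤ B := by
  unfold extV
  split
  · exact hu _
  · simpa using hB

lemma Fin.sum_ite_val_eq {M : Type*} [AddCommMonoid M] (k : ℕ) (x : M) :
    ∑ j : Fin l, (if (j : ℕ) = k then x else 0) = if k < l then x else 0 := by
  simp only [Fin.sum_univ_eq_sum_range (fun j => if j = k then x else 0), Finset.sum_ite_eq',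
    Finset.mem_range]

lemma jacobiMatrix_mul_apply (a V : ℕ → ℝ) (u : Fin l → ℝ) (i j : Fin l) :
    jacobiMatrix l a V i j * u j =
      (if (j : ℕ) = i + 1 then a (i + 2) * extV l u (i + 2) else 0) +
      (if (j : ℕ) = i - 1 then a (i + 1) * extV l u i else 0) +
      (if (j : ℕ) = i then V (i + 1) * extV l u (i + 1) else 0) := by
  rw [← extV_succ u j]
  obtain ⟨i, hi⟩ := i
  obtain ⟨j, hj⟩ := j
  simp only [jacobiMatrix, Fin.mk.injEq]
  -- for `i = 0` the truncated `i - 1` makes the middle term fire at `j = 0`, where it is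
  -- `a 1 * extV l u 0 = 0`
  split_ifs <;> subst_vars <;>
    first | (exfalso; omega) | simp [show j = 0 by omega, extV_zero] | simp

lemma jacobiMatrix_mulVec_apply (a V : ℕ → ℝ) (u : Fin l → ℝ) (i : Fin l) :
    (jacobiMatrix l a V).mulVec u i =
      a (i + 2) * extV l u (i + 2) + a (i + 1) * extV l u i + V (i + 1) * extV l u (i + 1) := by
  simp only [Matrix.mulVec, dotProduct, jacobiMatrix_mul_apply, Finset.sum_add_distrib,
    Fin.sum_ite_val_eq, if_pos i.isLt, if_pos (show (i : ℕ) - 1 < l by have := i.isLt; omega)]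
  by_cases h : (i : ℕ) + 1 < l
  · rw [if_pos h]
  · rw [if_neg h, extV_of_lt u (by omega : l < (i : ℕ) + 2), mul_zero]

end JacobiRow

lemma abs_le_mul_max_of_mul_add_mul_eq {M P a b p x y z : ℝ} (hM : 0 < M) (ha : 1 / M ≤ |a|)
    (hb : |b| ≤ M) (hp : |p| ≤ P) (h : a * x + b * z = p * y) :
    |x| ≤ M * (P + M) * max |y| |z| := by
  have hax : |a| * |x| ≤ P * |y| + M * |z| := by
    rw [← abs_mul, show a * x = p * y - b * z by linarith]
    calc |p * y - b * z| ≤ |p * y| + |b * z| := abs_sub _ _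
      _ ≤ P * |y| + M * |z| := by rw [abs_mul, abs_mul]; gcongr
  have hP : 0 ≤ P := (abs_nonneg p).trans hp
  calc |x| = M * (1 / M * |x|) := by field_simp
    _ ≤ M * (|a| * |x|) := by gcongr
    _ ≤ M * (P * max |y| |z| + M * max |y| |z|) := by
        gcongr M * ?_
        exact hax.trans (by gcongr <;> simp)
    _ = M * (P + M) * max |y| |z| := by ring

lemma le_pow_sub_mul_of_le_mul_succ {f : ℕ → ℝ} {C : ℝ} {N : ℕ} (hC : 0 ≤ C)
    (h : ∀ k < N, f k ≤ C * f (k + 1)) {i j : ℕ} (hij : i ≤ j) (hj : j ≤ N) :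
    f i ≤ C ^ (j - i) * f j := by
  induction j, hij using Nat.le_induction with
  | base => simp
  | succ j hij ih =>
    calc f i ≤ C ^ (j - i) * f j := ih (by omega)
      _ ≤ C ^ (j - i) * (C * f (j + 1)) := by gcongr; exact h j (by omega)
      _ = C ^ (j + 1 - i) * f (j + 1) := by rw [Nat.sub_add_comm hij, pow_succ]; ring

lemma le_pow_sub_mul_of_succ_le_mul {f : ℕ → ℝ} {C : ℝ} {N : ℕ} (hC : 0 ≤ C)
    (h : ∀ k < N, f (k + 1) ≤ C * f k) {i j : ℕ} (hij : i ≤ j) (hj : j ≤ N) :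
    f j ≤ C ^ (j - i) * f i := by
  induction j, hij using Nat.le_induction with
  | base => simp
  | succ j hij ih =>
    calc f (j + 1) ≤ C * f j := h j (by omega)
      _ ≤ C * (C ^ (j - i) * f i) := by gcongr; exact ih (by omega)
      _ = C ^ (j + 1 - i) * f i := by rw [Nat.sub_add_comm hij, pow_succ]; ring

lemma le_pow_natAbs_mul {f : ℕ → ℝ} {C : ℝ} {N : ℕ} (hC : 0 ≤ C)
    (h : ∀ k < N, f (k + 1) ≤ C * f k ∧ f k ≤ C * f (k + 1)) {i j : ℕ} (hi : i ≤ N)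
    (hj : j ≤ N) : f i ≤ C ^ ((i : ℤ) - j).natAbs * f j := by
  rcases le_total i j with hij | hji
  · rw [show ((i : ℤ) - j).natAbs = j - i by omega]
    exact le_pow_sub_mul_of_le_mul_succ hC (fun k hk => (h k hk).2) hij hj
  · rw [show ((i : ℤ) - j).natAbs = i - j by omega]
    exact le_pow_sub_mul_of_succ_le_mul hC (fun k hk => (h k hk).1) hji hi

lemma eventually_sqrt_mul_pow_le_exp {C β : ℝ} (hC : 1 < C) (hβ : 0 < β) :
    ∀ᶠ l : ℕ in Filter.atTop, ∀ d : ℕ, (d : ℝ) ≤ 1 / (2 * Real.log C) * (l : ℝ) ^ β →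
      √(l : ℝ) * C ^ d ≤ Real.exp ((l : ℝ) ^ β) := by
  have hlog : ∀ᶠ x : ℝ in Filter.atTop, Real.log x ≤ x ^ β := by
    filter_upwards [(isLittleO_log_rpow_atTop hβ).bound one_pos, Filter.eventually_ge_atTop 0]
      with x hx hx0
    rw [one_mul, Real.norm_eq_abs, Real.norm_of_nonneg (Real.rpow_nonneg hx0 β)] at hx
    exact (le_abs_self _).trans hx
  filter_upwards [tendsto_natCast_atTop_atTop.eventually hlog, Filter.eventually_gt_atTop 0]
    with l hl hl0 d hd
  have hlogC : 0 < Real.log C := Real.log_pos hC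
  have hdC : d * Real.log C ≤ (l : ℝ) ^ β / 2 := by
    rw [div_mul_eq_mul_div, le_div_iff₀ (by positivity)] at hd
    linarith
  have hl0' : (0 : ℝ) < l := by exact_mod_cast hl0
  rw [← Real.log_le_iff_le_exp (by positivity), Real.log_mul (by positivity) (by positivity),
    Real.log_sqrt hl0'.le, Real.log_pow]
  linarith

section Eigenvector

variable {l : ℕ} {a V : ℕ → ℝ} {u : Fin l → ℝ} {E M K : ℝ}

lemma abs_eigenvalue_le (ha : ∀ n, 1 ≤ n → n ≤ l + 1 → |a n| ≤ M)
    (hV : ∀ n, 1 ≤ n → n ≤ l → |V n| ≤ K) (hu : (jacobiMatrix l a V).mulVec u = E • u)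
    {i : Fin l} (hi : ∀ j, |u j| ≤ |u i|) (hui : u i ≠ 0) : |E| ≤ 2 * M + K := by
  have hext := abs_extV_le (abs_nonneg (u i)) hi
  have hrow := congrFun hu i
  rw [jacobiMatrix_mulVec_apply, Pi.smul_apply, smul_eq_mul] at hrow
  have hterm {c B : ℝ} (hc : |c| ≤ B) (n : ℕ) : |c * extV l u n| ≤ B * |u i| := by
    rw [abs_mul]
    exact mul_le_mul hc (hext n) (abs_nonneg _) ((abs_nonneg c).trans hc)
  refine le_of_mul_le_mul_right ?_ (abs_pos.2 hui)
  calc |E| * |u i| = |E * u i| := (abs_mul _ _).symm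
    _ ≤ |a (i + 2) * extV l u (i + 2)| + |a (i + 1) * extV l u i| +
        |V (i + 1) * extV l u (i + 1)| := by rw [← hrow]; exact abs_add_three _ _ _
    _ ≤ M * |u i| + M * |u i| + K * |u i| := by
        gcongr
        exacts [hterm (ha _ (by omega) (by omega)) _, hterm (ha _ (by omega) (by omega)) _,
          hterm (hV _ (by omega) (by omega)) _]
    _ = (2 * M + K) * |u i| := by ring

/-- The sup-norm analogue of the Prüfer radius `r_u(n + 1)`. -/
def pruferMax (l : ℕ) (u : Fin l → ℝ) (n : ℕ) : ℝ :=
  max |extV l u n| |extV l u (n + 1)|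

lemma pruferMax_nonneg {n : ℕ} : 0 ≤ pruferMax l u n :=
  (abs_nonneg _).trans (le_max_left _ _)

lemma abs_le_pruferMax (i : Fin l) : |u i| ≤ pruferMax l u (i + 1) := by
  rw [pruferMax, extV_succ]
  exact le_max_left _ _

lemma pruferMax_succ_le_and_le_succ {P : ℝ} (hM : 0 < M)
    (ha : ∀ n, 1 ≤ n → n ≤ l + 1 → 1 / M ≤ |a n| ∧ |a n| ≤ M)
    (hP : ∀ n, 1 ≤ n → n ≤ l → |E - V n| ≤ P) (hC : 1 ≤ M * (P + M))
    (hu : (jacobiMatrix l a V).mulVec u = E • u) {n : ℕ} (hn : n < l) :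
    pruferMax l u (n + 1) ≤ M * (P + M) * pruferMax l u n ∧
      pruferMax l u n ≤ M * (P + M) * pruferMax l u (n + 1) := by
  have hrow := congrFun hu ⟨n, hn⟩
  rw [jacobiMatrix_mulVec_apply, Pi.smul_apply, smul_eq_mul, ← extV_succ u] at hrow
  obtain ⟨ha₁, ha₁'⟩ := ha (n + 1) (by omega) (by omega)
  obtain ⟨ha₂, ha₂'⟩ := ha (n + 2) (by omega) (by omega)
  have hp := hP (n + 1) (by omega) (by omega)
  have hup := abs_le_mul_max_of_mul_add_mul_eq hM ha₂ ha₁' hp (x := extV l u (n + 2))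
    (y := extV l u (n + 1)) (z := extV l u n) (by linarith)
  have hdown := abs_le_mul_max_of_mul_add_mul_eq hM ha₁ ha₂' hp (x := extV l u n)
    (y := extV l u (n + 1)) (z := extV l u (n + 2)) (by linarith)
  have hmid {x : ℝ} (hx : |extV l u (n + 1)| ≤ x) : |extV l u (n + 1)| ≤ M * (P + M) * x :=
    hx.trans (le_mul_of_one_le_left ((abs_nonneg _).trans hx) hC)
  constructor
  · exact max_le (hmid (le_max_right _ _)) (by rwa [max_comm] at hup)
  · exact max_le hdown (hmid (le_max_left _ _))

end Eigenvector

lemma one_le_sqrt_card_mul_abs {ι : Type*} [Fintype ι] {u : ι → ℝ}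
    (hu : ∑ j, u j ^ 2 = 1) {i : ι} (hi : ∀ j, |u j| ≤ |u i|) :
    1 ≤ √(Fintype.card ι : ℝ) * |u i| := by
  have hsq : 1 ≤ Fintype.card ι * u i ^ 2 :=
    calc (1 : ℝ) = ∑ j, u j ^ 2 := hu.symm
      _ ≤ ∑ _j : ι, u i ^ 2 := Finset.sum_le_sum fun j _ => sq_le_sq.2 (hi j)
      _ = Fintype.card ι * u i ^ 2 := by simp
  rw [← Real.sqrt_sq_eq_abs, ← Real.sqrt_mul (by positivity)]
  exact Real.one_le_sqrt.2 hsq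

theorem stmt5_general (M K : ℝ) (hM : 1 < M) (hK : 0 < K) (β : ℝ) (hβ0 : 0 < β) :
    ∃ c : ℝ, 0 < c ∧ ∃ l₀ : ℕ, ∀ l : ℕ, l₀ ≤ l →
      ∀ (a V : ℕ → ℝ),
        (∀ n, 1 ≤ n → n ≤ l + 1 → 1 / M ≤ |a n| ∧ |a n| ≤ M) →
        (∀ n, 1 ≤ n → n ≤ l → |V n| ≤ K) →
        ∀ (u : Fin l → ℝ) (E : ℝ),
          (jacobiMatrix l a V).mulVec u = E • u → (∑ i, u i ^ 2) = 1 →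
          ∃ n₀ : ℕ, 1 ≤ n₀ ∧ n₀ ≤ l ∧
            ∀ m : ℕ, 1 ≤ m → m ≤ l - 1 → |(m : ℝ) - (n₀ : ℝ)| ≤ c * (l : ℝ) ^ β →
              Real.exp (-(l : ℝ) ^ β) ≤ max |extV l u m| |extV l u (m + 1)| := by
  set C := M * ((2 * M + 2 * K) + M)
  have hC : 1 < C := by nlinarith
  obtain ⟨l₀, hl₀⟩ := Filter.eventually_atTop.1 (eventually_sqrt_mul_pow_le_exp hC hβ0)
  refine ⟨1 / (2 * Real.log C), by have := Real.log_pos hC; positivity, max l₀ 1, ?_⟩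
  intro l hl a V ha hV u E hu hnorm
  obtain ⟨i, -, hi⟩ := Finset.exists_max_image Finset.univ (fun j => |u j|)
    ⟨⟨0, by omega⟩, Finset.mem_univ _⟩
  replace hi j : |u j| ≤ |u i| := hi j (Finset.mem_univ j)
  have hmass := one_le_sqrt_card_mul_abs hnorm hi
  rw [Fintype.card_fin] at hmass
  have hE := abs_eigenvalue_le (fun n h₁ h₂ => (ha n h₁ h₂).2) hV hu hi
    (abs_pos.1 (pos_of_mul_pos_right (one_pos.trans_le hmass) (by positivity)))
  have hstep (k : ℕ) (hk : k < l) := pruferMax_succ_le_and_le_succ (by linarith) ha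
    (fun n h₁ h₂ => (abs_sub _ _).trans (by linarith [hV n h₁ h₂])) hC.le hu hk
  refine ⟨i + 1, by omega, i.isLt, fun m hm₁ hm₂ hmd => ?_⟩
  have hchain := le_pow_natAbs_mul (by positivity) hstep (i := i + 1) (j := m) i.isLt (by omega)
  have hdist := hl₀ l (le_of_max_le_left hl) ((((i : ℕ) + 1 : ℕ) : ℤ) - m).natAbs (by
    rw [Nat.cast_natAbs, Int.cast_abs, Int.cast_sub, abs_sub_comm]; exact_mod_cast hmd)
  change Real.exp _ ≤ pruferMax l u m
  rw [Real.exp_neg, inv_le_iff_one_le_mul₀' (Real.exp_pos _)]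
  calc 1 ≤ √l * |u i| := hmass
    _ ≤ √l * (C ^ _ * pruferMax l u m) := by gcongr; exact (abs_le_pruferMax i).trans hchain
    _ = (√l * C ^ _) * pruferMax l u m := by ring
    _ ≤ Real.exp ((l : ℝ) ^ β) * pruferMax l u m := by gcongr; exact pruferMax_nonneg

/-- Lemma `lem-large`.  A normalized eigenvector of a Jacobi matrix has a
site `n₀` around which, in a window of radius `c·l^β`, at each `m` either `|u(m)|` or
`|u(m+1)|` is at least `e^{-l^β}`. -/
theorem stmt5 (M K : ℝ) (hM : 1 < M) (hK : 0 < K) (β : ℝ) (hβ0 : 0 < β) (hβ1 : β < 1) :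
    ∃ c : ℝ, 0 < c ∧ ∃ l₀ : ℕ, ∀ l : ℕ, l₀ ≤ l →
      ∀ (a V : ℕ → ℝ),
        (∀ n, 1 ≤ n → n ≤ l + 1 → 1 / M ≤ |a n| ∧ |a n| ≤ M) →
        (∀ n, 1 ≤ n → n ≤ l → |V n| ≤ K) →
        ∀ (u : Fin l → ℝ) (E : ℝ),
          (jacobiMatrix l a V).mulVec u = E • u → (∑ i, u i ^ 2) = 1 →
          ∃ n₀ : ℕ, 1 ≤ n₀ ∧ n₀ ≤ l ∧
            ∀ m : ℕ, 1 ≤ m → m ≤ l - 1 → |(m : ℝ) - (n₀ : ℝ)| ≤ c * (l : ℝ) ^ β →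
              Real.exp (-(l : ℝ) ^ β) ≤ max |extV l u m| |extV l u (m + 1)| :=
  stmt5_general M K hM hK β hβ0
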